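/- Assume Q_n has n pairwise distinct roots z_0, …, z_{n−1}, and let T be the n×n matrix with entries T[i,j] = Q_i(z_j) (0 ≤ i, j ≤ n−1). Then T is invertible and for every j, the (j,0) entry of T^{−1} equals P_n(z_j)/Q_n′(z_j). Consequently, for any s_0 ∈ ℂ, the residue ρ_j = s_0 z_j P_n(z_j)/Q_n′(z_j) of the rational function s_0 w P_n(w)/Q_n(w) at the pole z_j satisfies ρ_j = s_0 z_j (T^{−1})[j,0]. -/

import Mathlib

/-!
The vector `x_j = P_n(z_j) / Q_n'(z_j)` solves `T x = e_0`. Indeed, since `Q_n(z_j) = 0`,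
`Q_i(z_j) P_n(z_j)` is the value at `z_j` of `W_i = Q_i P_n - P_i Q_n`, and Lagrange
interpolation at the roots of `Q_n` gives `∑_j f(z_j) / Q_n'(z_j) = [w^{n-1}] f` whenever
`deg f < n`. As a function of `n`, `W_i` solves the three-term recurrence, vanishes at
`n = i` and is constant (a Casoratian) at `n = i + 1`; hence `deg W_i ≤ n - 1 - i`, while
`W_0 = P_n` is monic of degree `n - 1`. Invertibility of `T` holds because its rows come
from the monic polynomials `Q_i` of degree `i`, so that `det T` is the Vandermonde
determinant of the distinct `z_j`.
-/

open Polynomial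

/-- The `n × n` tridiagonal matrix `J_n` with diagonal entries `c_0, …, c_{n−1}`,
subdiagonal entries `d_1, …, d_{n−1}` (the entry in row `i`, column `i−1` is `d_i`),
and all superdiagonal entries equal to `1`. -/
noncomputable def Jmat (n : ℕ) (c d : ℕ → ℂ) : Matrix (Fin n) (Fin n) ℂ :=
  Matrix.of fun i j =>
    if (i : ℕ) = (j : ℕ) then c i
    else if (i : ℕ) + 1 = (j : ℕ) then 1
    else if (i : ℕ) = (j : ℕ) + 1 then d i
    else 0

/-- `Q_0 = 1`, `Q_1 = w − c_0`, `Q_{l+1} = (w − c_l) Q_l − d_l Q_{l−1}`. -/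
noncomputable def Qpoly (c d : ℕ → ℂ) : ℕ → Polynomial ℂ
  | 0 => 1
  | 1 => X - C (c 0)
  | l + 2 => (X - C (c (l + 1))) * Qpoly c d (l + 1) - C (d (l + 1)) * Qpoly c d l

/-- `P_0 = 0`, `P_1 = 1`, `P_{l+1} = (w − c_l) P_l − d_l P_{l−1}`. -/
noncomputable def Ppoly (c d : ℕ → ℂ) : ℕ → Polynomial ℂ
  | 0 => 0
  | 1 => 1
  | l + 2 => (X - C (c (l + 1))) * Ppoly c d (l + 1) - C (d (l + 1)) * Ppoly c d l

open Finset

open scoped Matrix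

section Recurrence

variable {R : Type*} [CommRing R]

theorem monic_X_sub_C_mul_sub_C_mul [Nontrivial R] {f g : R[X]} (a b : R) (hf : f.Monic)
    (hg : g.degree < f.degree) :
    ((X - C a) * f - C b * g).Monic ∧ ((X - C a) * f - C b * g).natDegree = f.natDegree + 1 := by
  have hXf : ((X - C a) * f).natDegree = f.natDegree + 1 := by
    rw [(monic_X_sub_C a).natDegree_mul hf, natDegree_X_sub_C, add_comm]
  have hlt : (C b * g).natDegree < ((X - C a) * f).natDegree := by
    rw [hXf]
    exact Nat.lt_succ_of_le ((natDegree_C_mul_le b g).trans (natDegree_le_natDegree hg.le))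
  refine ⟨((monic_X_sub_C a).mul hf).sub_of_left (degree_lt_degree hlt), ?_⟩
  rw [natDegree_sub_eq_left_of_natDegree_lt hlt, hXf]

theorem natDegree_X_sub_C_mul_sub_C_mul_le {f g : R[X]} {m : ℕ} (a b : R)
    (hf : f.natDegree ≤ m) (hg : g.natDegree ≤ m + 1) :
    ((X - C a) * f - C b * g).natDegree ≤ m + 1 := by
  have hXf : ((X - C a) * f).natDegree ≤ 1 + m :=
    natDegree_mul_le_of_le (natDegree_X_sub_C_le a) hf
  have hCg : (C b * g).natDegree ≤ m + 1 := (natDegree_C_mul_le b g).trans hg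
  simpa [add_comm] using natDegree_sub_le_of_le hXf hCg

def SolvesRecurrence (c d : ℕ → R) (p : ℕ → R[X]) : Prop :=
  ∀ l, p (l + 2) = (X - C (c (l + 1))) * p (l + 1) - C (d (l + 1)) * p l

namespace SolvesRecurrence

variable {c d : ℕ → R} {p q : ℕ → R[X]}

theorem mul_sub_mul (hp : SolvesRecurrence c d p) (hq : SolvesRecurrence c d q) (a b : R[X]) :
    SolvesRecurrence c d fun m => a * p m - b * q m := by
  intro l
  dsimp only
  rw [hp l, hq l]
  ring

theorem casoratian_succ (hp : SolvesRecurrence c d p) (hq : SolvesRecurrence c d q) (m : ℕ) :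
    p (m + 1) * q (m + 2) - q (m + 1) * p (m + 2)
      = C (d (m + 1)) * (p m * q (m + 1) - q m * p (m + 1)) := by
  rw [hp m, hq m]
  ring

theorem eq_succ_add {k : ℕ} (hp : SolvesRecurrence c d p) (t : ℕ) :
    p (k + 1 + (t + 1))
      = (X - C (c (k + 1 + t))) * p (k + 1 + t) - C (d (k + 1 + t)) * p (k + t) := by
  rw [show k + 1 + (t + 1) = k + t + 2 by omega, hp, show k + t + 1 = k + 1 + t by omega]

theorem monic_natDegree [Nontrivial R] {k : ℕ} (hp : SolvesRecurrence c d p)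
    (hmonic : (p (k + 1)).Monic) (hlt : (p k).degree < (p (k + 1)).degree) (t : ℕ) :
    (p (k + 1 + t)).Monic ∧ (p (k + 1 + t)).natDegree = (p (k + 1)).natDegree + t := by
  suffices ∀ t, (p (k + 1 + t)).Monic ∧ (p (k + t)).degree < (p (k + 1 + t)).degree ∧
      (p (k + 1 + t)).natDegree = (p (k + 1)).natDegree + t from
    ⟨(this t).1, (this t).2.2⟩
  intro t
  induction t with
  | zero => exact ⟨hmonic, hlt, rfl⟩
  | succ t ih =>
    obtain ⟨ht_monic, ht_lt, ht_deg⟩ := ih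
    rw [show k + (t + 1) = k + 1 + t by omega, hp.eq_succ_add]
    obtain ⟨hnext_monic, hnext_deg⟩ := monic_X_sub_C_mul_sub_C_mul
      (c (k + 1 + t)) (d (k + 1 + t)) ht_monic ht_lt
    exact ⟨hnext_monic, degree_lt_degree (by omega), by omega⟩

theorem natDegree_le {k m : ℕ} (hp : SolvesRecurrence c d p) (h₀ : (p k).natDegree ≤ m)
    (h₁ : (p (k + 1)).natDegree ≤ m) (t : ℕ) : (p (k + 1 + t)).natDegree ≤ m + t := by
  suffices ∀ t, (p (k + t)).natDegree ≤ m + t ∧ (p (k + 1 + t)).natDegree ≤ m + t from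
    (this t).2
  intro t
  induction t with
  | zero => exact ⟨h₀, h₁⟩
  | succ t ih =>
    refine ⟨by rw [show k + (t + 1) = k + 1 + t by omega]; exact ih.2.trans (Nat.le_succ _), ?_⟩
    rw [hp.eq_succ_add]
    exact natDegree_X_sub_C_mul_sub_C_mul_le _ _ ih.2 (ih.1.trans (Nat.le_succ _))

end SolvesRecurrence

end Recurrence

section Interpolation

variable {K : Type*} [Field K] {n : ℕ} {z : Fin n → K}

theorem eq_nodal_of_monic_of_eval_eq_zero (hz : Function.Injective z) {Q : K[X]} (hQ : Q.Monic)
    (hdeg : Q.natDegree = n) (hroot : ∀ j, Q.eval (z j) = 0) : Q = Lagrange.nodal univ z := by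
  have hdegree : Q.degree = n := by rw [degree_eq_natDegree hQ.ne_zero, hdeg]
  refine Polynomial.eq_of_degree_le_of_eval_index_eq univ hz.injOn (by simp [hdegree])
    (by simp [hdegree, Lagrange.degree_nodal])
    (by rw [hQ.leadingCoeff, Lagrange.nodal_monic.leadingCoeff])
    fun j _ => by rw [hroot, Lagrange.eval_nodal_at_node (mem_univ j)]

theorem sum_eval_div_eval_derivative_eq_coeff (hz : Function.Injective z) {Q f : K[X]}
    (hQ : Q.Monic) (hdeg : Q.natDegree = n) (hroot : ∀ j, Q.eval (z j) = 0) (hf : f.degree < n) :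
    ∑ j, f.eval (z j) / (derivative Q).eval (z j) = f.coeff (n - 1) := by
  classical
  obtain rfl := eq_nodal_of_monic_of_eval_eq_zero hz hQ hdeg hroot
  have h := Lagrange.coeff_eq_sum (s := univ) hz.injOn (P := f) (by simpa using hf)
  rw [card_univ, Fintype.card_fin] at h
  rw [h]
  refine sum_congr rfl fun j _ => ?_
  rw [Lagrange.eval_nodal_derivative_eval_node_eq (mem_univ j), Lagrange.eval_nodal]

theorem isUnit_of_eval_of_monic_of_natDegree_eq (hz : Function.Injective z) {p : ℕ → K[X]}
    (hp : ∀ i, (p i).Monic ∧ (p i).natDegree = i) :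
    IsUnit (Matrix.of fun i j : Fin n => eval (z j) (p i)) := by
  rw [Matrix.isUnit_iff_isUnit_det, isUnit_iff_ne_zero, ← Matrix.det_transpose]
  have h := Matrix.det_eval_matrixOfPolynomials_eq_det_vandermonde z (fun i => p i)
    (fun i => (hp i).2) (fun i => (hp i).1)
  rw [← Matrix.det_vandermonde_ne_zero_iff] at hz
  rwa [h] at hz

end Interpolation

section Qpoly

variable (c d : ℕ → ℂ)

theorem solvesRecurrence_Qpoly : SolvesRecurrence c d (Qpoly c d) := fun _ => rfl

theorem solvesRecurrence_Ppoly : SolvesRecurrence c d (Ppoly c d) := fun _ => rfl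

theorem monic_Qpoly_and_natDegree (l : ℕ) :
    (Qpoly c d l).Monic ∧ (Qpoly c d l).natDegree = l := by
  cases l with
  | zero => exact ⟨monic_one, natDegree_one⟩
  | succ l =>
    have h := (solvesRecurrence_Qpoly c d).monic_natDegree (k := 0)
      (monic_X_sub_C (c 0)) (by simp [Qpoly, degree_X_sub_C]) l
    simpa [Qpoly, natDegree_X_sub_C, add_comm] using h

theorem monic_Ppoly_succ_and_natDegree (l : ℕ) :
    (Ppoly c d (l + 1)).Monic ∧ (Ppoly c d (l + 1)).natDegree = l := by
  have h := (solvesRecurrence_Ppoly c d).monic_natDegree (k := 0) monic_one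
    (by simp [Ppoly]) l
  simpa [Ppoly, add_comm] using h

theorem Qpoly_mul_Ppoly_succ_sub (m : ℕ) :
    Qpoly c d m * Ppoly c d (m + 1) - Ppoly c d m * Qpoly c d (m + 1)
      = C (∏ l ∈ range m, d (l + 1)) := by
  induction m with
  | zero => simp [Qpoly, Ppoly]
  | succ m ih =>
    rw [(solvesRecurrence_Qpoly c d).casoratian_succ (solvesRecurrence_Ppoly c d), ih,
      prod_range_succ, C_mul, mul_comm]

theorem natDegree_Qpoly_mul_Ppoly_sub_le (i t : ℕ) :
    (Qpoly c d i * Ppoly c d (i + 1 + t) - Ppoly c d i * Qpoly c d (i + 1 + t)).natDegree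
      ≤ t := by
  have hW := (solvesRecurrence_Ppoly c d).mul_sub_mul (solvesRecurrence_Qpoly c d)
    (Qpoly c d i) (Ppoly c d i)
  simpa using hW.natDegree_le (k := i) (m := 0) (by simp [mul_comm])
    (by rw [Qpoly_mul_Ppoly_succ_sub, natDegree_C]) t

theorem coeff_Qpoly_mul_Ppoly_sub {n i : ℕ} (hi : i < n) :
    (Qpoly c d i * Ppoly c d n - Ppoly c d i * Qpoly c d n).coeff (n - 1)
      = if i = 0 then 1 else 0 := by
  obtain ⟨t, rfl⟩ : ∃ t, n = i + 1 + t := ⟨n - (i + 1), by omega⟩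
  rcases Nat.eq_zero_or_pos i with rfl | hi₀
  · obtain ⟨hmonic, hdeg⟩ := monic_Ppoly_succ_and_natDegree c d t
    rw [if_pos rfl, show 0 + 1 + t - 1 = t by omega, show 0 + 1 + t = t + 1 by omega]
    show (1 * Ppoly c d (t + 1) - 0 * Qpoly c d (t + 1)).coeff t = 1
    rw [one_mul, zero_mul, sub_zero, ← hmonic.coeff_natDegree, hdeg]
  · rw [if_neg hi₀.ne']
    exact coeff_eq_zero_of_natDegree_lt
      ((natDegree_Qpoly_mul_Ppoly_sub_le c d i t).trans_lt (by omega))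

theorem Qpoly_eval_matrix_mulVec {n : ℕ} (hn : 1 ≤ n) {z : Fin n → ℂ}
    (hz : Function.Injective z) (hroot : ∀ j, eval (z j) (Qpoly c d n) = 0) :
    (Matrix.of fun i j : Fin n => eval (z j) (Qpoly c d i)) *ᵥ
        (fun j => eval (z j) (Ppoly c d n) / eval (z j) (derivative (Qpoly c d n)))
      = Pi.single ⟨0, hn⟩ 1 := by
  ext i
  set W := Qpoly c d i * Ppoly c d n - Ppoly c d i * Qpoly c d n
  have hW_eval : ∀ j, eval (z j) W = eval (z j) (Qpoly c d i) * eval (z j) (Ppoly c d n) := by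
    simp [W, hroot]
  have hW_degree : W.degree < n := by
    have h := natDegree_Qpoly_mul_Ppoly_sub_le c d i (n - 1 - i)
    rw [show (i : ℕ) + 1 + (n - 1 - i) = n by omega] at h
    exact (degree_le_of_natDegree_le h).trans_lt (by exact_mod_cast (by omega : n - 1 - i < n))
  obtain ⟨hQ_monic, hQ_deg⟩ := monic_Qpoly_and_natDegree c d n
  calc _ = ∑ j, eval (z j) W / eval (z j) (derivative (Qpoly c d n)) := by
          simp [Matrix.mulVec, dotProduct, hW_eval, mul_div_assoc]
    _ = W.coeff (n - 1) :=
          sum_eval_div_eval_derivative_eq_coeff hz hQ_monic hQ_deg hroot hW_degree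
    _ = _ := by
          rw [coeff_Qpoly_mul_Ppoly_sub c d i.2]
          simp [Pi.single_apply, Fin.ext_iff]

end Qpoly

/-- Assume `Q_n` has `n` pairwise distinct roots `z_0, …, z_{n−1}` and let
`T[i,j] = Q_i(z_j)`.  Then `T` is invertible,  for every `j` the `(j,0)` entry of `T⁻¹`
equals `P_n(z_j)/Q_n′(z_j)`, and consequently for any `s_0 ∈ ℂ` the residue
`ρ_j = s_0 z_j P_n(z_j)/Q_n′(z_j)` of `s_0 w P_n(w)/Q_n(w)` at `z_j` satisfies
`ρ_j = s_0 z_j (T⁻¹)[j,0]`. -/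
theorem residue_via_eigenvectors (n : ℕ) (hn : 1 ≤ n) (c d : ℕ → ℂ)
    (z : Fin n → ℂ) (hz : Function.Injective z)
    (hroot : ∀ j, eval (z j) (Qpoly c d n) = 0) :
    IsUnit (Matrix.of fun i j : Fin n => eval (z j) (Qpoly c d i)) ∧
    (∀ j : Fin n,
      (Matrix.of fun i j : Fin n => eval (z j) (Qpoly c d i))⁻¹ j ⟨0, hn⟩
        = eval (z j) (Ppoly c d n) / eval (z j) (derivative (Qpoly c d n))) ∧
    ∀ (s0 : ℂ) (j : Fin n),
      s0 * z j * eval (z j) (Ppoly c d n) / eval (z j) (derivative (Qpoly c d n))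
        = s0 * z j * (Matrix.of fun i j : Fin n => eval (z j) (Qpoly c d i))⁻¹ j ⟨0, hn⟩ := by
  set T := Matrix.of fun i j : Fin n => eval (z j) (Qpoly c d i)
  have hunit : IsUnit T :=
    isUnit_of_eval_of_monic_of_natDegree_eq hz (monic_Qpoly_and_natDegree c d)
  have hinv : ∀ j : Fin n,
      T⁻¹ j ⟨0, hn⟩ = eval (z j) (Ppoly c d n) / eval (z j) (derivative (Qpoly c d n)) := by
    have := hunit.invertible
    have hcol := Matrix.inv_mulVec_eq_vec (Qpoly_eval_matrix_mulVec c d hn hz hroot).symm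
    rw [Matrix.mulVec_single_one] at hcol
    exact congrFun hcol
  exact ⟨hunit, hinv, fun s0 j => by rw [mul_div_assoc, hinv j]⟩
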